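/- Let d be either the ℓ¹ distance d₁ or the logarithmic distance d_l on ℝ², let U, V ⊆ ℝ², c > 0, n ≥ 1, and let S₁,…,Sₙ : ℤ²×ℤ² → M_m(ℂ) be Hermitian kernels with |S_j(x,y)| ≤ C_j e^{−c d(x,y)} for all j and all x,y ∈ ℤ². Suppose there exist p, q ∈ {1,…,n} such that |S_p(x,y)| ≤ C_p e^{−c d(x,y) − c d(x,∂U) − c d(y,∂U)} and |S_q(x,y)| ≤ C_q e^{−c d(x,y) − c d(x,∂V) − c d(y,∂V)} for all x,y. Assume M := Σ_{z∈ℤ²} e^{−(c/4) d(z,0)} < ∞. Then the iterated kernel product S₁·…·Sₙ is given by absolutely convergent sums and satisfies |(S₁·…·Sₙ)(x,y)| ≤ (∏_{j=1}^n C_j) · M^{n−1} · e^{−(c/4)(d(x,y) + d(x,∂U) + d(y,∂U) + d(x,∂V) + d(y,∂V))} for all x, y ∈ ℤ². -/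

import Mathlib

/-!
Each kernel obeys `|S_j(x,y)| ≤ C_j exp(-(c/4) G_j(x,y))`, where `G_j` charges `2 d(x,y)` and,
for each of `∂U`, `∂V`, either `d(x,y)` or, for the kernel carrying that boundary decay, the two
distances of `x`, `y` to the boundary. Inductively the product of the first `k + 1` kernels decays
like `exp(-(c/4) W_k)`, where `W_k` charges `d(x,y)` and, per boundary, the distances to it once
its kernel has been absorbed and `d(x,y)` before. A convolution step loses nothing: the triangle
inequality and the 1-Lipschitz property of the distance to a set give
`W_{k+1}(x,y) + d(z,y) ≤ W_k(x,z) + G_{k+1}(z,y)`, and the leftover `exp(-(c/4) d(z,y))` sums to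
`M` by translation invariance.
-/

noncomputable section

/-- The lattice ℤ². -/
abbrev Z2 := ℤ × ℤ
/-- The plane ℝ². -/
abbrev R2 := ℝ × ℝ

/-- The ℓ¹ distance on the plane. -/
def d1 (x y : R2) : ℝ := |x.1 - y.1| + |x.2 - y.2|

/-- The ℓ¹ distance from a point to a set. -/
def d1S (x : R2) (S : Set R2) : ℝ := sInf (d1 x '' S)

/-- The logarithmic distance on the plane: d_l(x,y) = ln(1 + d₁(x,y)). -/
def dl (x y : R2) : ℝ := Real.log (1 + d1 x y)

/-- The logarithmic distance from a point to a set. -/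
def dlS (x : R2) (S : Set R2) : ℝ := Real.log (1 + d1S x S)

/-- The Euclidean norm on the plane. -/
def eunorm (x : R2) : ℝ := Real.sqrt (x.1 ^ 2 + x.2 ^ 2)

/-- The Euclidean distance on the plane. -/
def eudist (x y : R2) : ℝ := eunorm (x - y)

/-- The embedding of ℤ² into ℝ². -/
def emb (x : Z2) : R2 := ((x.1 : ℝ), (x.2 : ℝ))

/-- Ψ_{U,V}(x) = 1 + d₁(x,∂U) + d₁(x,∂V). -/
def Psi (U V : Set R2) (x : R2) : ℝ := 1 + d1S x (frontier U) + d1S x (frontier V)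

/-- U and V are transverse: for some c ∈ (0,1), Ψ_{U,V}(x) ≥ |x|ᶜ whenever |x| ≥ 1/c. -/
def Transverse (U V : Set R2) : Prop :=
  ∃ c : ℝ, 0 < c ∧ c < 1 ∧ ∀ x : R2, 1 / c ≤ eunorm x → eunorm x ^ c ≤ Psi U V x

/-- The operator norm of an m×m complex matrix. -/
def matNorm {m : ℕ} (M : Matrix (Fin m) (Fin m) ℂ) : ℝ :=
  ‖Matrix.toEuclideanCLM (𝕜 := ℂ) M‖

/-- The real-valued indicator function of a subset of the plane. -/
def indR (W : Set R2) (z : R2) : ℝ := Set.indicator W (fun _ => (1:ℝ)) z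

/-- Product of two kernels: (A·B)(x,y) = Σ_z A(x,z)B(z,y). -/
def kprod {m : ℕ} (A B : Z2 → Z2 → Matrix (Fin m) (Fin m) ℂ) :
    Z2 → Z2 → Matrix (Fin m) (Fin m) ℂ :=
  fun x y => ∑' z : Z2, A x z * B z y

/-- Left-associated iterated kernel products: PP S k = ((S 0 · S 1) · ⋯) · S k. -/
def PP {m : ℕ} (S : ℕ → Z2 → Z2 → Matrix (Fin m) (Fin m) ℂ) :
    ℕ → Z2 → Z2 → Matrix (Fin m) (Fin m) ℂ
  | 0 => S 0
  | k + 1 => kprod (PP S k) (S (k + 1))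

open Real Finset
open scoped Matrix.Norms.L2Operator

structure IsPlaneDistance (d : R2 → R2 → ℝ) (dS : R2 → Set R2 → ℝ) : Prop where
  nonneg : ∀ x y, 0 ≤ d x y
  symm : ∀ x y, d x y = d y x
  triangle : ∀ x y z, d x z ≤ d x y + d y z
  setDist_nonneg : ∀ x W, 0 ≤ dS x W
  setDist_le : ∀ x y W, dS x W ≤ d x y + dS y W
  emb_sub : ∀ z w : Z2, d (emb z) (emb w) = d (emb (z - w)) (0, 0)

lemma d1_nonneg (x y : R2) : 0 ≤ d1 x y := add_nonneg (abs_nonneg _) (abs_nonneg _)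

lemma d1_comm (x y : R2) : d1 x y = d1 y x := by
  rw [d1, d1, abs_sub_comm, abs_sub_comm x.2]

lemma d1_triangle (x y z : R2) : d1 x z ≤ d1 x y + d1 y z := by
  have h₁ := abs_sub_le x.1 y.1 z.1
  have h₂ := abs_sub_le x.2 y.2 z.2
  simp only [d1]
  linarith

lemma d1S_nonneg (x : R2) (W : Set R2) : 0 ≤ d1S x W :=
  Real.sInf_nonneg (by rintro _ ⟨s, -, rfl⟩; exact d1_nonneg _ _)

lemma d1S_le_d1_add (x y : R2) (W : Set R2) : d1S x W ≤ d1 x y + d1S y W := by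
  rcases W.eq_empty_or_nonempty with rfl | ⟨w, hw⟩
  · simpa [d1S] using d1_nonneg x y
  have hbdd : BddBelow (d1 x '' W) := ⟨0, by rintro _ ⟨s, -, rfl⟩; exact d1_nonneg _ _⟩
  rw [d1S, d1S, ← sub_le_iff_le_add']
  refine le_csInf ⟨_, w, hw, rfl⟩ ?_
  rintro _ ⟨s, hs, rfl⟩
  rw [sub_le_iff_le_add']
  exact (csInf_le hbdd ⟨s, hs, rfl⟩).trans (d1_triangle _ _ _)

lemma d1_emb_sub (z w : Z2) : d1 (emb z) (emb w) = d1 (emb (z - w)) (0, 0) := by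
  simp [d1, emb]

lemma isPlaneDistance_d1 : IsPlaneDistance d1 d1S :=
  ⟨d1_nonneg, d1_comm, d1_triangle, d1S_nonneg, d1S_le_d1_add, d1_emb_sub⟩

lemma log_one_add_le_add {a b t : ℝ} (ha : 0 ≤ a) (hb : 0 ≤ b) (ht : 0 ≤ t) (hab : t ≤ a + b) :
    log (1 + t) ≤ log (1 + a) + log (1 + b) := by
  rw [← log_mul (by linarith) (by linarith)]
  exact log_le_log (by linarith) (by nlinarith)

lemma IsPlaneDistance.log_one_add {d : R2 → R2 → ℝ} {dS : R2 → Set R2 → ℝ}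
    (h : IsPlaneDistance d dS) :
    IsPlaneDistance (fun x y => log (1 + d x y)) (fun x W => log (1 + dS x W)) where
  nonneg x y := log_nonneg (by linarith [h.nonneg x y])
  symm x y := by rw [h.symm]
  triangle x y z :=
    log_one_add_le_add (h.nonneg _ _) (h.nonneg _ _) (h.nonneg _ _) (h.triangle _ _ _)
  setDist_nonneg x W := log_nonneg (by linarith [h.setDist_nonneg x W])
  setDist_le x y W :=
    log_one_add_le_add (h.nonneg _ _) (h.setDist_nonneg _ _) (h.setDist_nonneg _ _)
      (h.setDist_le _ _ _)
  emb_sub z w := by rw [h.emb_sub]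

lemma isPlaneDistance_dl : IsPlaneDistance dl dlS :=
  isPlaneDistance_d1.log_one_add

section KernelProducts

variable {m : ℕ}

lemma matNorm_mul_le (X Y : Matrix (Fin m) (Fin m) ℂ) : matNorm (X * Y) ≤ matNorm X * matNorm Y :=
  norm_mul_le X Y

lemma prod_range_mul_pow_nonneg {n k : ℕ} {Cf : ℕ → ℝ} {M : ℝ} (hCf : ∀ j < n, 0 ≤ Cf j)
    (hM : 0 ≤ M) (hk : k < n) : 0 ≤ (∏ j ∈ range (k + 1), Cf j) * M ^ k :=
  mul_nonneg (prod_nonneg fun j hj => hCf j (by simp at hj; omega)) (pow_nonneg hM k)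

lemma nonneg_of_matNorm_le_mul_exp {X : Matrix (Fin m) (Fin m) ℂ} {C a : ℝ}
    (h : matNorm X ≤ C * exp a) : 0 ≤ C :=
  nonneg_of_mul_nonneg_left ((norm_nonneg _).trans h) (exp_pos a)

/-- `s` is the part of the decay spent on summing over the middle point `z`. -/
theorem summable_and_matNorm_kprod_le {A B : Z2 → Z2 → Matrix (Fin m) (Fin m) ℂ} {x y : Z2}
    {a b w : ℝ} {wA wB s : Z2 → ℝ} (ha : 0 ≤ a) (hb : 0 ≤ b)
    (hA : ∀ z, matNorm (A x z) ≤ a * exp (-wA z)) (hB : ∀ z, matNorm (B z y) ≤ b * exp (-wB z))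
    (hw : ∀ z, w + s z ≤ wA z + wB z) (hs : Summable fun z => exp (-s z)) :
    (Summable fun z => matNorm (A x z * B z y)) ∧
      matNorm (kprod A B x y) ≤ a * b * (∑' z, exp (-s z)) * exp (-w) := by
  have hterm : ∀ z, matNorm (A x z * B z y) ≤ a * b * exp (-w) * exp (-s z) := fun z =>
    calc matNorm (A x z * B z y) ≤ matNorm (A x z) * matNorm (B z y) := matNorm_mul_le _ _
      _ ≤ (a * exp (-wA z)) * (b * exp (-wB z)) :=
        mul_le_mul (hA z) (hB z) (norm_nonneg _) (by positivity)
      _ = a * b * exp (-(wA z + wB z)) := by rw [neg_add, exp_add]; ring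
      _ ≤ a * b * exp (-(w + s z)) := by gcongr a * b * exp (-?_); exact hw z
      _ = a * b * exp (-w) * exp (-s z) := by rw [neg_add, exp_add]; ring
  have hsum : Summable fun z => matNorm (A x z * B z y) :=
    (hs.mul_left _).of_nonneg_of_le (fun _ => norm_nonneg _) hterm
  refine ⟨hsum, ?_⟩
  calc matNorm (kprod A B x y) ≤ ∑' z, matNorm (A x z * B z y) :=
      norm_tsum_le_tsum_norm (E := Matrix (Fin m) (Fin m) ℂ) hsum
    _ ≤ ∑' z, a * b * exp (-w) * exp (-s z) := hsum.tsum_le_tsum hterm (hs.mul_left _)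
    _ = a * b * (∑' z, exp (-s z)) * exp (-w) := by rw [tsum_mul_left]; ring

theorem matNorm_PP_le {n : ℕ} {S : ℕ → Z2 → Z2 → Matrix (Fin m) (Fin m) ℂ} {Cf : ℕ → ℝ}
    {G W : ℕ → Z2 → Z2 → ℝ} {s : Z2 → Z2 → ℝ} {M : ℝ}
    (hS : ∀ j < n, ∀ x y, matNorm (S j x y) ≤ Cf j * exp (-G j x y))
    (hW₀ : ∀ x y, W 0 x y ≤ G 0 x y)
    (hW : ∀ k x z y, W (k + 1) x y + s z y ≤ W k x z + G (k + 1) z y)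
    (hs : ∀ y, Summable fun z => exp (-s z y)) (hM : ∀ y, ∑' z, exp (-s z y) = M) :
    ∀ k < n, ∀ x y,
      matNorm (PP S k x y) ≤ (∏ j ∈ range (k + 1), Cf j) * M ^ k * exp (-W k x y) := by
  have hCf : ∀ j < n, 0 ≤ Cf j := fun j hj => nonneg_of_matNorm_le_mul_exp (hS j hj 0 0)
  have hM₀ : 0 ≤ M := hM 0 ▸ tsum_nonneg fun _ => (exp_pos _).le
  intro k
  induction k with
  | zero =>
    intro hn x y
    simpa [PP] using (hS 0 hn x y).trans (by gcongr; exacts [hCf 0 hn, hW₀ x y])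
  | succ k ih =>
    intro hk x y
    refine (summable_and_matNorm_kprod_le (prod_range_mul_pow_nonneg hCf hM₀ (by omega))
      (hCf _ hk) (ih (by omega) x) (hS _ hk · y) (hW k x · y) (hs y)).2.trans_eq ?_
    rw [hM, prod_range_succ _ (k + 1), pow_succ]
    ring

theorem summable_matNorm_PP_mul {n : ℕ} {S : ℕ → Z2 → Z2 → Matrix (Fin m) (Fin m) ℂ}
    {Cf : ℕ → ℝ} {G W : ℕ → Z2 → Z2 → ℝ} {s : Z2 → Z2 → ℝ} {M : ℝ}
    (hS : ∀ j < n, ∀ x y, matNorm (S j x y) ≤ Cf j * exp (-G j x y))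
    (hW₀ : ∀ x y, W 0 x y ≤ G 0 x y)
    (hW : ∀ k x z y, W (k + 1) x y + s z y ≤ W k x z + G (k + 1) z y)
    (hs : ∀ y, Summable fun z => exp (-s z y)) (hM : ∀ y, ∑' z, exp (-s z y) = M) :
    ∀ k, k + 1 < n → ∀ x y, Summable fun z => matNorm (PP S k x z * S (k + 1) z y) := by
  intro k hk x y
  have hM₀ : 0 ≤ M := hM 0 ▸ tsum_nonneg fun _ => (exp_pos _).le
  have hCf : ∀ j < n, 0 ≤ Cf j := fun j hj => nonneg_of_matNorm_le_mul_exp (hS j hj 0 0)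
  exact (summable_and_matNorm_kprod_le (prod_range_mul_pow_nonneg hCf hM₀ (by omega)) (hCf _ hk)
    (matNorm_PP_le hS hW₀ hW hs hM k (by omega) x) (hS _ hk · y) (hW k x · y) (hs y)).1

end KernelProducts

section Weights

variable {d : R2 → R2 → ℝ} {dS : R2 → Set R2 → ℝ}

lemma IsPlaneDistance.comp_dist_emb (h : IsPlaneDistance d dS) (g : ℝ → ℝ) (y : Z2) :
    (fun z => g (d (emb z) (emb y))) = (fun z => g (d (emb z) (0, 0))) ∘ Equiv.subRight y :=
  funext fun z => by simp [h.emb_sub]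

lemma IsPlaneDistance.summable_comp_dist (h : IsPlaneDistance d dS) {g : ℝ → ℝ}
    (hg : Summable fun z : Z2 => g (d (emb z) (0, 0))) (y : Z2) :
    Summable fun z : Z2 => g (d (emb z) (emb y)) := by
  rw [h.comp_dist_emb g y]
  exact (Equiv.subRight y).summable_iff.2 hg

lemma IsPlaneDistance.tsum_comp_dist (h : IsPlaneDistance d dS) (g : ℝ → ℝ) (y : Z2) :
    ∑' z : Z2, g (d (emb z) (emb y)) = ∑' z : Z2, g (d (emb z) (0, 0)) := by
  rw [h.comp_dist_emb g y]
  exact (Equiv.subRight y).tsum_eq fun z => g (d (emb z) (0, 0))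

variable (d dS)

def boundaryWeight (U : Set R2) (active : Prop) [Decidable active] (x y : Z2) : ℝ :=
  if active then dS (emb x) (frontier U) + dS (emb y) (frontier U) else d (emb x) (emb y)

def kernelWeight (U V : Set R2) (c : ℝ) (p q j : ℕ) (x y : Z2) : ℝ :=
  c / 4 * (2 * d (emb x) (emb y) + boundaryWeight d dS U (j = p) x y
    + boundaryWeight d dS V (j = q) x y)

def productWeight (U V : Set R2) (c : ℝ) (p q k : ℕ) (x y : Z2) : ℝ :=
  c / 4 * (d (emb x) (emb y) + boundaryWeight d dS U (p ≤ k) x y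
    + boundaryWeight d dS V (q ≤ k) x y)

variable {d dS}

lemma IsPlaneDistance.boundaryWeight_succ_le (h : IsPlaneDistance d dS) (U : Set R2) (p k : ℕ)
    (x z y : Z2) :
    boundaryWeight d dS U (p ≤ k + 1) x y ≤
      boundaryWeight d dS U (p ≤ k) x z + boundaryWeight d dS U (k + 1 = p) z y := by
  unfold boundaryWeight
  split_ifs <;> first
    | omega
    | linarith [h.setDist_le (emb y) (emb z) (frontier U), h.symm (emb y) (emb z),
        h.setDist_le (emb x) (emb z) (frontier U), h.triangle (emb x) (emb z) (emb y)]

lemma IsPlaneDistance.productWeight_zero_le (h : IsPlaneDistance d dS) {c : ℝ} (hc : 0 ≤ c)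
    (U V : Set R2) (p q : ℕ) (x y : Z2) :
    productWeight d dS U V c p q 0 x y ≤ kernelWeight d dS U V c p q 0 x y := by
  unfold productWeight kernelWeight boundaryWeight
  gcongr c / 4 * ?_
  split_ifs <;> first | omega | linarith [h.nonneg (emb x) (emb y)]

lemma IsPlaneDistance.productWeight_succ_add_le (h : IsPlaneDistance d dS) {c : ℝ} (hc : 0 ≤ c)
    (U V : Set R2) (p q k : ℕ) (x z y : Z2) :
    productWeight d dS U V c p q (k + 1) x y + c / 4 * d (emb z) (emb y) ≤
      productWeight d dS U V c p q k x z + kernelWeight d dS U V c p q (k + 1) z y := by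
  have hU := h.boundaryWeight_succ_le U p k x z y
  have hV := h.boundaryWeight_succ_le V q k x z y
  have htri := h.triangle (emb x) (emb z) (emb y)
  unfold productWeight kernelWeight
  rw [← mul_add, ← mul_add]
  gcongr c / 4 * ?_
  linarith

/-- When the same kernel decays away from both `∂U` and `∂V`, it gets the larger of the two
exponents, which dominates their average. -/
lemma IsPlaneDistance.matNorm_le_kernelWeight {m : ℕ} (h : IsPlaneDistance d dS) {c : ℝ}
    (hc : 0 < c) {S : Z2 → Z2 → Matrix (Fin m) (Fin m) ℂ} {C : ℝ} {U V : Set R2} {p q j : ℕ}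
    (hS : ∀ x y, matNorm (S x y) ≤ C * exp (-c * d (emb x) (emb y)))
    (hSp : j = p → ∀ x y, matNorm (S x y) ≤ C * exp (-c * d (emb x) (emb y)
      - c * dS (emb x) (frontier U) - c * dS (emb y) (frontier U)))
    (hSq : j = q → ∀ x y, matNorm (S x y) ≤ C * exp (-c * d (emb x) (emb y)
      - c * dS (emb x) (frontier V) - c * dS (emb y) (frontier V)))
    (x y : Z2) : matNorm (S x y) ≤ C * exp (-kernelWeight d dS U V c p q j x y) := by
  have hC := nonneg_of_matNorm_le_mul_exp (hS x y)
  suffices ∃ a, matNorm (S x y) ≤ C * exp a ∧ a ≤ -kernelWeight d dS U V c p q j x y by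
    obtain ⟨a, hSa, ha⟩ := this
    exact hSa.trans (by gcongr)
  have he := mul_nonneg hc.le (h.nonneg (emb x) (emb y))
  have hUx := mul_nonneg hc.le (h.setDist_nonneg (emb x) (frontier U))
  have hUy := mul_nonneg hc.le (h.setDist_nonneg (emb y) (frontier U))
  have hVx := mul_nonneg hc.le (h.setDist_nonneg (emb x) (frontier V))
  have hVy := mul_nonneg hc.le (h.setDist_nonneg (emb y) (frontier V))
  unfold kernelWeight boundaryWeight
  split_ifs with hjp hjq hjq
  · rcases le_total (dS (emb x) (frontier U) + dS (emb y) (frontier U))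
      (dS (emb x) (frontier V) + dS (emb y) (frontier V)) with huv | huv
    · exact ⟨_, hSq hjq x y, by nlinarith⟩
    · exact ⟨_, hSp hjp x y, by nlinarith⟩
  · exact ⟨_, hSp hjp x y, by linarith⟩
  · exact ⟨_, hSq hjq x y, by linarith⟩
  · exact ⟨_, hS x y, by linarith⟩

end Weights

/-- The kernels are indexed by `0, …, n − 1`. -/
theorem kernel_product_bound_general
    (m : ℕ) (n : ℕ)
    (d : R2 → R2 → ℝ) (dS : R2 → Set R2 → ℝ)
    (hd : (d = d1 ∧ dS = d1S) ∨ (d = dl ∧ dS = dlS))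
    (U V : Set R2) (c : ℝ) (hc : 0 < c)
    (S : ℕ → Z2 → Z2 → Matrix (Fin m) (Fin m) ℂ) (Cf : ℕ → ℝ)
    (hS : ∀ j < n, ∀ x y : Z2, matNorm (S j x y) ≤ Cf j * Real.exp (-c * d (emb x) (emb y)))
    (p : ℕ) (hp : p < n)
    (hSp : ∀ x y : Z2, matNorm (S p x y) ≤ Cf p * Real.exp (-c * d (emb x) (emb y)
      - c * dS (emb x) (frontier U) - c * dS (emb y) (frontier U)))
    (q : ℕ) (hq : q < n)
    (hSq : ∀ x y : Z2, matNorm (S q x y) ≤ Cf q * Real.exp (-c * d (emb x) (emb y)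
      - c * dS (emb x) (frontier V) - c * dS (emb y) (frontier V)))
    (hM : Summable fun z : Z2 => Real.exp (-(c / 4) * d (emb z) (0, 0))) :
    (∀ k : ℕ, k + 1 < n → ∀ x y : Z2,
      Summable fun z : Z2 => matNorm (PP S k x z * S (k + 1) z y)) ∧
    (∀ x y : Z2, matNorm (PP S (n - 1) x y) ≤
      (∏ j ∈ Finset.range n, Cf j) *
        (∑' z : Z2, Real.exp (-(c / 4) * d (emb z) (0, 0))) ^ (n - 1) *
        Real.exp (-(c / 4) * (d (emb x) (emb y)
          + dS (emb x) (frontier U) + dS (emb y) (frontier U)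
          + dS (emb x) (frontier V) + dS (emb y) (frontier V)))) := by
  have hdist : IsPlaneDistance d dS := by
    rcases hd with ⟨rfl, rfl⟩ | ⟨rfl, rfl⟩
    exacts [isPlaneDistance_d1, isPlaneDistance_dl]
  have hkernel (j : ℕ) (hj : j < n) :=
    hdist.matNorm_le_kernelWeight (U := U) (V := V) (p := p) (q := q) (j := j) hc (hS j hj)
      (by rintro rfl; exact hSp) (by rintro rfl; exact hSq)
  simp only [neg_mul] at hM ⊢
  have hs := hdist.summable_comp_dist (g := fun t => exp (-(c / 4 * t))) hM
  have htsum := hdist.tsum_comp_dist fun t => exp (-(c / 4 * t))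
  have hW₀ := hdist.productWeight_zero_le hc.le U V p q
  have hW := hdist.productWeight_succ_add_le hc.le U V p q
  refine ⟨summable_matNorm_PP_mul hkernel hW₀ hW hs htsum, fun x y => ?_⟩
  have hbound := matNorm_PP_le hkernel hW₀ hW hs htsum (n - 1) (by omega) x y
  rw [Nat.sub_add_cancel (by omega : 1 ≤ n)] at hbound
  refine hbound.trans_eq ?_
  simp only [productWeight, boundaryWeight, if_pos (by omega : p ≤ n - 1),
    if_pos (by omega : q ≤ n - 1)]
  ring_nf

/-- Lemma 2.4: bound for iterated products of short-range kernels,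
two of which decay away from ∂U resp. ∂V; the kernels are indexed by 0,…,n−1. -/
theorem kernel_product_bound
    (m : ℕ) (hm : 0 < m) (n : ℕ) (hn : 1 ≤ n)
    (d : R2 → R2 → ℝ) (dS : R2 → Set R2 → ℝ)
    (hd : (d = d1 ∧ dS = d1S) ∨ (d = dl ∧ dS = dlS))
    (U V : Set R2) (c : ℝ) (hc : 0 < c)
    (S : ℕ → Z2 → Z2 → Matrix (Fin m) (Fin m) ℂ) (Cf : ℕ → ℝ)
    (hHerm : ∀ j < n, ∀ x y : Z2, S j x y = Matrix.conjTranspose (S j y x))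
    (hS : ∀ j < n, ∀ x y : Z2, matNorm (S j x y) ≤ Cf j * Real.exp (-c * d (emb x) (emb y)))
    (p : ℕ) (hp : p < n)
    (hSp : ∀ x y : Z2, matNorm (S p x y) ≤ Cf p * Real.exp (-c * d (emb x) (emb y)
      - c * dS (emb x) (frontier U) - c * dS (emb y) (frontier U)))
    (q : ℕ) (hq : q < n)
    (hSq : ∀ x y : Z2, matNorm (S q x y) ≤ Cf q * Real.exp (-c * d (emb x) (emb y)
      - c * dS (emb x) (frontier V) - c * dS (emb y) (frontier V)))
    (hM : Summable fun z : Z2 => Real.exp (-(c / 4) * d (emb z) (0, 0))) :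
    (∀ k : ℕ, k + 1 < n → ∀ x y : Z2,
      Summable fun z : Z2 => matNorm (PP S k x z * S (k + 1) z y)) ∧
    (∀ x y : Z2, matNorm (PP S (n - 1) x y) ≤
      (∏ j ∈ Finset.range n, Cf j) *
        (∑' z : Z2, Real.exp (-(c / 4) * d (emb z) (0, 0))) ^ (n - 1) *
        Real.exp (-(c / 4) * (d (emb x) (emb y)
          + dS (emb x) (frontier U) + dS (emb y) (frontier U)
          + dS (emb x) (frontier V) + dS (emb y) (frontier V)))) :=
  kernel_product_bound_general m n d dS hd U V c hc S Cf hS p hp hSp q hq hSq hM
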